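/- For $d = 2$ and $n \geq 3$: in any labeling of $(\mathbb{Z}/n\mathbb{Z})^2$ with the letters C, A, T, the number of occurrences of CAT (triples $x, x+v, x+2v$ with labels C, A, T in order, where $v \in \{-1,0,1\}^2 \setminus \{0\}$) is at most $(3/2) n^2$. -/

import Mathlib

open Finset

inductive Letter | C | A | T
deriving DecidableEq

/-!
A CAT at `(x, v)` contains the CA-edge `(x, v)` and the AT-edge `(x + v, v)`, so twice the number
of CATs is at most the number of edges reading CA or AT. Each of these has exactly one endpoint
labelled A, and no edge reads CA one way and AT the other, so orienting the edges along the
directions `a, b, b - a, a + b` (with `a = (1, 0)`, `b = (0, 1)`) embeds them into the edges cut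
by the set of A's. These four directions cover the edges of the torus by copies of the triangle
`x, x + a, x + b` together with the edge `(x, x + a + b)`; a triangle has at most two cut edges,
so each copy contributes at most three, and `2 · #CAT ≤ 3 n²`.
-/

def Letter.IsNext (a b : Letter) : Prop := a = .C ∧ b = .A ∨ a = .A ∧ b = .T

instance : DecidableRel Letter.IsNext := fun _ _ => by unfold Letter.IsNext; infer_instance

theorem Letter.IsNext.not_isNext_swap {a b : Letter} (h : a.IsNext b) : ¬ b.IsNext a := by
  cases a <;> cases b <;> simp_all [Letter.IsNext]

theorem Letter.IsNext.decide_eq_A_ne {a b : Letter} (h : a.IsNext b) :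
    decide (a = .A) ≠ decide (b = .A) := by
  cases a <;> cases b <;> simp_all [Letter.IsNext]

theorem triangle_add_edge_cut_le_three (p q r s : Bool) :
    (if p ≠ q then 1 else 0) + (if p ≠ r then 1 else 0) + (if q ≠ r then 1 else 0) +
      (if p ≠ s then 1 else 0) ≤ 3 := by
  cases p <;> cases q <;> cases r <;> cases s <;> decide

section Torus

variable {G : Type*} [AddCommGroup G] [Fintype G]

def catOccurrences (D : G → Prop) [DecidablePred D] (L : G → Letter) : Finset (G × G) :=
  {p | D p.2 ∧ L p.1 = .C ∧ L (p.1 + p.2) = .A ∧ L (p.1 + 2 • p.2) = .T}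

def nextOccurrences (D : G → Prop) [DecidablePred D] (L : G → Letter) : Finset (G × G) :=
  {p | D p.2 ∧ (L p.1).IsNext (L (p.1 + p.2))}

def flipCount (χ : G → Bool) (w : G) : ℕ := #{x | χ x ≠ χ (x + w)}

theorem flipCount_eq_sum (χ : G → Bool) (w : G) :
    flipCount χ w = ∑ x, if χ x ≠ χ (x + w) then 1 else 0 :=
  card_filter _ _

theorem flipCount_sub (χ : G → Bool) (a b : G) :
    flipCount χ (b - a) = ∑ x, if χ (x + a) ≠ χ (x + b) then 1 else 0 := by
  rw [flipCount_eq_sum, ← Equiv.sum_comp (Equiv.addRight a)]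
  simp only [Equiv.coe_addRight, add_add_sub_cancel]

variable [DecidableEq G]

def boundaryEdges (χ : G → Bool) (P : Finset G) : Finset (G × G) :=
  {p | p.2 ∈ P ∧ χ p.1 ≠ χ (p.1 + p.2)}

theorem card_boundaryEdges_insert_le (χ : G → Bool) (w : G) (P : Finset G) :
    #(boundaryEdges χ (insert w P)) ≤ flipCount χ w + #(boundaryEdges χ P) := by
  set flips : Finset G := {x | χ x ≠ χ (x + w)}
  have hsub : boundaryEdges χ (insert w P) ⊆ flips.image (·, w) ∪ boundaryEdges χ P := by
    intro p hp
    simp only [boundaryEdges, flips, mem_filter, mem_univ, true_and, mem_insert, mem_union,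
      mem_image] at hp ⊢
    obtain ⟨rfl | hP, hne⟩ := hp
    · exact .inl ⟨p.1, hne, rfl⟩
    · exact .inr ⟨hP, hne⟩
  calc #(boundaryEdges χ (insert w P))
      ≤ #(flips.image (·, w)) + #(boundaryEdges χ P) :=
        (card_le_card hsub).trans (card_union_le _ _)
    _ ≤ flipCount χ w + #(boundaryEdges χ P) := by gcongr; exact card_image_le

theorem card_boundaryEdges_singleton_le (χ : G → Bool) (w : G) :
    #(boundaryEdges χ {w}) ≤ flipCount χ w := by
  simpa [boundaryEdges] using card_boundaryEdges_insert_le χ w ∅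

theorem card_boundaryEdges_le (χ : G → Bool) (a b : G) :
    #(boundaryEdges χ {a, b, b - a, a + b}) ≤ 3 * Fintype.card G := by
  calc #(boundaryEdges χ {a, b, b - a, a + b})
      ≤ flipCount χ a + (flipCount χ b + (flipCount χ (b - a) + flipCount χ (a + b))) := by
        grw [card_boundaryEdges_insert_le, card_boundaryEdges_insert_le,
          card_boundaryEdges_insert_le, card_boundaryEdges_singleton_le]
    _ ≤ ∑ _x : G, 3 := by
        rw [flipCount_sub]
        simp only [flipCount_eq_sum, ← sum_add_distrib]
        exact sum_le_sum fun x _ => by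
          simpa only [add_assoc] using
            triangle_add_edge_cut_le_three (χ x) (χ (x + a)) (χ (x + b)) (χ (x + (a + b)))
    _ = 3 * Fintype.card G := by simp [mul_comm]

variable (D : G → Prop) [DecidablePred D] (L : G → Letter)

theorem two_mul_card_catOccurrences_le :
    2 * #(catOccurrences D L) ≤ #(nextOccurrences D L) := by
  let shift : G × G → G × G := fun p => (p.1 + p.2, p.2)
  have shift_inj : shift.Injective := fun p q h => by
    obtain ⟨h1, h2⟩ := Prod.mk.inj h
    exact Prod.ext (by simpa [h2] using h1) h2
  have hCA : catOccurrences D L ⊆ nextOccurrences D L := fun p hp => by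
    simp only [catOccurrences, nextOccurrences, mem_filter, mem_univ, true_and] at hp ⊢
    exact ⟨hp.1, .inl ⟨hp.2.1, hp.2.2.1⟩⟩
  have hAT : (catOccurrences D L).image shift ⊆ nextOccurrences D L := by
    simp only [subset_iff, mem_image, catOccurrences, nextOccurrences, mem_filter, mem_univ,
      true_and]
    rintro _ ⟨p, ⟨hD, -, hA, hT⟩, rfl⟩
    refine ⟨hD, .inr ⟨hA, ?_⟩⟩
    simpa [shift, two_nsmul, add_assoc] using hT
  have hdisj : Disjoint (catOccurrences D L) ((catOccurrences D L).image shift) := by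
    simp only [disjoint_left, mem_image, catOccurrences, mem_filter, mem_univ, true_and]
    rintro _ ⟨-, hC, -⟩ ⟨p, ⟨-, -, hA, -⟩, rfl⟩
    simp [shift, hA] at hC
  calc 2 * #(catOccurrences D L)
      = #(catOccurrences D L ∪ (catOccurrences D L).image shift) := by
        rw [card_union_of_disjoint hdisj, card_image_of_injective _ shift_inj, two_mul]
    _ ≤ #(nextOccurrences D L) := card_le_card (union_subset hCA hAT)

theorem card_nextOccurrences_le_card_boundaryEdges {P : Finset G}
    (hD : ∀ v, D v → v ∈ P ∨ -v ∈ P) :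
    #(nextOccurrences D L) ≤ #(boundaryEdges (fun x => decide (L x = .A)) P) := by
  let orient : G × G → G × G := fun p => if p.2 ∈ P then p else (p.1 + p.2, -p.2)
  refine card_le_card_of_injOn orient (fun p hp => ?_) (fun p hp q hq hpq => ?_)
  · simp only [coe_filter, nextOccurrences, boundaryEdges, mem_univ, true_and,
      Set.mem_ofPred_eq] at hp ⊢
    have hne := hp.2.decide_eq_A_ne
    by_cases hP : p.2 ∈ P
    · simp only [orient, if_pos hP]
      exact ⟨hP, hne⟩
    · simp only [orient, if_neg hP, add_neg_cancel_right]
      exact ⟨(hD _ hp.1).resolve_left hP, hne.symm⟩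
  · simp only [coe_filter, nextOccurrences, mem_univ, true_and, Set.mem_ofPred_eq] at hp hq
    by_cases hpP : p.2 ∈ P <;> by_cases hqP : q.2 ∈ P <;>
      simp only [orient, hpP, hqP, if_true, if_false] at hpq
    · exact hpq
    · subst hpq
      simp only [add_neg_cancel_right] at hp
      exact absurd hp.2 hq.2.not_isNext_swap
    · subst hpq
      simp only [add_neg_cancel_right] at hq
      exact absurd hq.2 hp.2.not_isNext_swap
    · obtain ⟨h1, h2⟩ := Prod.mk.inj hpq
      have h2 := neg_inj.mp h2
      exact Prod.ext (by simpa [h2] using h1) h2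

theorem two_mul_card_catOccurrences_le_three_mul (a b : G)
    (hD : ∀ v, D v →
      v ∈ ({a, b, b - a, a + b} : Finset G) ∨ -v ∈ ({a, b, b - a, a + b} : Finset G)) :
    2 * #(catOccurrences D L) ≤ 3 * Fintype.card G :=
  (two_mul_card_catOccurrences_le D L).trans <|
    (card_nextOccurrences_le_card_boundaryEdges D L hD).trans (card_boundaryEdges_le _ a b)

end Torus

def IsKingMove {n : ℕ} (v : Fin 2 → ZMod n) : Prop :=
  (∀ j, v j = 0 ∨ v j = 1 ∨ v j = -1) ∧ v ≠ 0

instance {n : ℕ} : DecidablePred (IsKingMove (n := n)) := fun _ => by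
  unfold IsKingMove; infer_instance

theorem IsKingMove.mem_or_neg_mem {n : ℕ} {v : Fin 2 → ZMod n} (hv : IsKingMove v) :
    let P : Finset (Fin 2 → ZMod n) := {![1, 0], ![0, 1], ![0, 1] - ![1, 0], ![1, 0] + ![0, 1]}
    v ∈ P ∨ -v ∈ P := by
  obtain ⟨hcoord, h0⟩ := hv
  have hv2 : v = ![v 0, v 1] := by ext j; fin_cases j <;> rfl
  rw [hv2] at h0 ⊢
  rcases hcoord 0 with h | h | h <;> rcases hcoord 1 with h' | h' | h' <;>
    simp [h, h'] at h0 ⊢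

theorem stmt_11_general (n : ℕ) [NeZero n]
    (L : (Fin 2 → ZMod n) → Letter) :
    ((Finset.univ.filter
        (fun p : (Fin 2 → ZMod n) × (Fin 2 → ZMod n) =>
          (∀ j, p.2 j = 0 ∨ p.2 j = 1 ∨ p.2 j = -1) ∧ p.2 ≠ 0 ∧
          L p.1 = Letter.C ∧ L (p.1 + p.2) = Letter.A ∧
          L (p.1 + 2 • p.2) = Letter.T)).card : ℝ)
      ≤ 3 / 2 * n ^ 2 := by
  have key := two_mul_card_catOccurrences_le_three_mul IsKingMove L ![1, 0] ![0, 1]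
    fun _ hv => hv.mem_or_neg_mem
  have hcard : Fintype.card (Fin 2 → ZMod n) = n ^ 2 := by simp
  have hcat : (#(catOccurrences IsKingMove L) : ℝ) ≤ 3 / 2 * n ^ 2 := by
    have := (Nat.cast_le (α := ℝ)).mpr (hcard ▸ key)
    push_cast at this
    linarith
  convert hcat using 3
  ext p
  simp [catOccurrences, IsKingMove, and_assoc]

theorem stmt_11 (n : ℕ) [NeZero n] (hn : 3 ≤ n)
    (L : (Fin 2 → ZMod n) → Letter) :
    ((Finset.univ.filter
        (fun p : (Fin 2 → ZMod n) × (Fin 2 → ZMod n) =>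
          (∀ j, p.2 j = 0 ∨ p.2 j = 1 ∨ p.2 j = -1) ∧ p.2 ≠ 0 ∧
          L p.1 = Letter.C ∧ L (p.1 + p.2) = Letter.A ∧
          L (p.1 + 2 • p.2) = Letter.T)).card : ℝ)
      ≤ 3 / 2 * n ^ 2 :=
  stmt_11_general n L
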